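/- arXiv:1803.06010 — 6 statements merged into one kernel-verified Lean document; each statement's English description precedes it below -/
import Mathlib

section
/- The sum of the ridge leverage scores of the columns of a matrix A is at most 2k. That is, for A ∈ ℝ^{n×d} of rank at least k, with λ = (1/k)‖A − A_k‖_F², the sum over all columns i of a_iᵀ (A Aᵀ + λ I)⁺ a_i is at most 2k. -/
open Matrix BigOperators Finset

noncomputable section

/-- Squared Frobenius norm of a real matrix. -/
def frobSq {m n : Type*} [Fintype m] [Fintype n] (A : Matrix m n ℝ) : ℝ :=
  ∑ i, ∑ j, (A i j) ^ 2

/-!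
Let `P` be the orthogonal projection onto the column space of `A_k` and `μ` the eigenvalues of
`A Aᵀ`; in an eigenbasis the diagonal entries `p_i` of `P` lie in `[0, 1]`. Since
`μ / (μ + λ) ≤ min 1 (μ / λ)`,
`∑ μ_i / (μ_i + λ) ≤ ∑ p_i + ∑ (1 - p_i) μ_i / λ = tr P + tr ((1 - P) A Aᵀ) / λ`.
Finally `tr P = rank A_k ≤ k` and, as `(1 - P) A_k = 0`,
`tr ((1 - P) A Aᵀ) = ‖(1 - P) (A - A_k)‖_F² ≤ ‖A - A_k‖_F² = k λ`.
-/

theorem div_add_le_add_one_sub_mul_div {μ lam p : ℝ} (hμ : 0 ≤ μ) (hlam : 0 < lam)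
    (hp : p ∈ Set.Icc 0 1) : μ / (μ + lam) ≤ p + (1 - p) * (μ / lam) := by
  have h1 : μ / (μ + lam) ≤ 1 := div_le_one_of_le₀ (by linarith) (by linarith)
  have h2 : μ / (μ + lam) ≤ μ / lam := div_le_div_of_nonneg_left hμ hlam (by linarith)
  nlinarith [hp.1, hp.2]

section Frobenius

variable {m n : Type*} [Fintype m] [Fintype n]

theorem frobSq_nonneg (A : Matrix m n ℝ) : 0 ≤ frobSq A :=
  sum_nonneg fun _ _ => sum_nonneg fun _ _ => sq_nonneg _

theorem frobSq_eq_trace (A : Matrix m n ℝ) : frobSq A = (A * Aᵀ).trace := by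
  simp [frobSq, trace, mul_apply, sq]

theorem IsStarProjection.frobSq_mul {P : Matrix m m ℝ} (hP : IsStarProjection P)
    (A : Matrix m n ℝ) : frobSq (P * A) = (P * (A * Aᵀ)).trace := by
  have hPt : Pᵀ = P := hP.isSelfAdjoint
  rw [frobSq_eq_trace, transpose_mul, hPt, ← Matrix.mul_assoc, Matrix.mul_assoc P,
    trace_mul_cycle, hP.isIdempotentElem.eq]

theorem IsStarProjection.trace_one_sub_mul_le_frobSq_sub [DecidableEq m] {P : Matrix m m ℝ}
    (hP : IsStarProjection P) {A B : Matrix m n ℝ} (hPB : P * B = B) :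
    ((1 - P) * (A * Aᵀ)).trace ≤ frobSq (A - B) := by
  have hQ := hP.one_sub
  have hQA : (1 - P) * A = (1 - P) * (A - B) := by
    rw [Matrix.mul_sub, Matrix.sub_mul 1 P B, Matrix.one_mul, hPB, sub_self, sub_zero]
  calc ((1 - P) * (A * Aᵀ)).trace = frobSq ((1 - P) * (A - B)) := by rw [← hQA, hQ.frobSq_mul]
    _ = frobSq (A - B) - frobSq (P * (A - B)) := by
      rw [hQ.frobSq_mul, hP.frobSq_mul, frobSq_eq_trace, Matrix.sub_mul, Matrix.one_mul,
        trace_sub]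
    _ ≤ frobSq (A - B) := sub_le_self _ (frobSq_nonneg _)

end Frobenius

section ColumnSpace

variable {𝕜 m n : Type*} [RCLike 𝕜] [Fintype m] [Fintype n] [DecidableEq m] [DecidableEq n]

def colSpaceProj (B : Matrix m n 𝕜) : Matrix m m 𝕜 :=
  (toEuclideanCLM (𝕜 := 𝕜) (n := m)).symm (LinearMap.range (toEuclideanLin B)).starProjection

theorem isStarProjection_colSpaceProj (B : Matrix m n 𝕜) : IsStarProjection (colSpaceProj B) :=
  isStarProjection_starProjection.map (toEuclideanCLM (𝕜 := 𝕜) (n := m)).symm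

theorem colSpaceProj_mul_self (B : Matrix m n 𝕜) : colSpaceProj B * B = B := by
  refine ext_of_mulVec_single fun j => ?_
  have hB : WithLp.toLp 2 (B *ᵥ Pi.single j 1) ∈ LinearMap.range (toEuclideanLin B) :=
    ⟨WithLp.toLp 2 (Pi.single j 1), rfl⟩
  rw [← mulVec_mulVec, ← ofLp_toEuclideanCLM, colSpaceProj, StarAlgEquiv.apply_symm_apply,
    Submodule.starProjection_eq_self_iff.mpr hB]

theorem trace_colSpaceProj (B : Matrix m n 𝕜) : (colSpaceProj B).trace = B.rank := by
  set V := LinearMap.range (toEuclideanLin B)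
  have hproj : LinearMap.IsProj V (V.starProjection : EuclideanSpace 𝕜 m →ₗ[𝕜] _) :=
    ⟨V.starProjection_apply_mem, fun _ hx => V.starProjection_eq_self_iff.mpr hx⟩
  rw [rank_eq_finrank_range_toLin B (EuclideanSpace.basisFun m 𝕜).toBasis
    (EuclideanSpace.basisFun n 𝕜).toBasis, ← toEuclideanLin_eq_toLin_orthonormal, ← hproj.trace,
    LinearMap.trace_eq_matrix_trace _ (EuclideanSpace.basisFun m 𝕜).toBasis]
  rfl

end ColumnSpace

section Spectral

variable {m : Type*} [Fintype m]

theorem IsStarProjection.diag_mem_Icc {P : Matrix m m ℝ} (hP : IsStarProjection P) (i : m) :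
    P i i ∈ Set.Icc 0 1 := by
  have hsq : P i i = ∑ j, P i j ^ 2 := by
    conv_lhs => rw [← hP.isIdempotentElem.eq, mul_apply]
    refine sum_congr rfl fun j _ => ?_
    rw [sq, ← hP.isSelfAdjoint.isHermitian.apply i j, star_trivial]
  have h0 : 0 ≤ P i i := hsq ▸ sum_nonneg fun j _ => sq_nonneg (P i j)
  have hle : P i i ^ 2 ≤ P i i := hsq ▸ single_le_sum (fun j _ => sq_nonneg (P i j)) (mem_univ i)
  exact ⟨h0, by nlinarith⟩

variable [DecidableEq m]

theorem Matrix.trace_conjStarAlgAut {R : Type*} [CommRing R] [StarRing R]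
    (U : unitary (Matrix m m R)) (X : Matrix m m R) :
    (Unitary.conjStarAlgAut R _ U X).trace = X.trace := by
  rw [Unitary.conjStarAlgAut_apply, trace_mul_cycle, Unitary.coe_star_mul_self, Matrix.one_mul]

theorem Matrix.inv_conjStarAlgAut {R : Type*} [CommRing R] [StarRing R]
    (U : unitary (Matrix m m R)) (X : Matrix m m R) :
    (Unitary.conjStarAlgAut R _ U X)⁻¹ = Unitary.conjStarAlgAut R _ U X⁻¹ := by
  have hU : (U : Matrix m m R)⁻¹ = star (U : Matrix m m R) :=
    inv_eq_left_inv (Unitary.coe_star_mul_self U)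
  have hU' : (star U : Matrix m m R)⁻¹ = U :=
    inv_eq_left_inv (Unitary.coe_mul_star_self U)
  rw [Unitary.conjStarAlgAut_apply, Unitary.conjStarAlgAut_apply, mul_inv_rev, mul_inv_rev, hU,
    hU', Matrix.mul_assoc]

theorem Matrix.trace_diagonal_mul_inv_add_smul_le {μ : m → ℝ} (hμ : ∀ i, 0 ≤ μ i)
    {Q : Matrix m m ℝ} (hQ : IsStarProjection Q) {lam : ℝ} (hlam : 0 < lam) :
    (diagonal μ * (diagonal μ + lam • 1)⁻¹).trace ≤
      Q.trace + ((1 - Q) * diagonal μ).trace / lam := by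
  have hinv : (diagonal μ + lam • 1)⁻¹ = diagonal fun i => (μ i + lam)⁻¹ := by
    refine inv_eq_right_inv ?_
    rw [smul_one_eq_diagonal, diagonal_add, diagonal_mul_diagonal, ← diagonal_one]
    exact congrArg diagonal (funext fun i => mul_inv_cancel₀ (by linarith [hμ i]))
  have hQμ : ((1 - Q) * diagonal μ).trace = ∑ i, (1 - Q i i) * μ i := by
    simp [trace, mul_diagonal]
  rw [hinv, diagonal_mul_diagonal, trace_diagonal, hQμ, trace, sum_div, ← sum_add_distrib]
  refine sum_le_sum fun i _ => ?_
  rw [mul_div_assoc]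
  exact div_add_le_add_one_sub_mul_div (hμ i) hlam (hQ.diag_mem_Icc i)

theorem Matrix.PosSemidef.trace_mul_inv_add_smul_le {M P : Matrix m m ℝ} (hM : M.PosSemidef)
    (hP : IsStarProjection P) {lam : ℝ} (hlam : 0 < lam) :
    (M * (M + lam • 1)⁻¹).trace ≤ P.trace + ((1 - P) * M).trace / lam := by
  set φ := Unitary.conjStarAlgAut ℝ (Matrix m m ℝ) hM.1.eigenvectorUnitary
  have hM' : M = φ (diagonal hM.1.eigenvalues) := hM.1.spectral_theorem
  obtain ⟨Q, rfl⟩ : ∃ Q, P = φ Q := ⟨φ.symm P, (φ.apply_symm_apply P).symm⟩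
  have hQ : IsStarProjection Q := by
    simpa only [StarAlgEquiv.symm_apply_apply] using hP.map φ.symm
  rw [hM', ← map_one φ, ← map_smul, ← map_add, inv_conjStarAlgAut, ← map_sub, ← map_mul,
    ← map_mul, trace_conjStarAlgAut, trace_conjStarAlgAut, trace_conjStarAlgAut]
  exact trace_diagonal_mul_inv_add_smul_le hM.eigenvalues_nonneg hQ hlam

end Spectral

theorem ridge_leverage_sum_le_two_k_general {n d k : ℕ}
    (A Ak : Matrix (Fin n) (Fin d) ℝ)
    (hAk_rank : Ak.rank ≤ k)
    (lam : ℝ) (hlam : lam = 1 / (k : ℝ) * frobSq (A - Ak)) (hlam_pos : 0 < lam) :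
    ∑ i, ((Aᵀ * (A * Aᵀ + lam • 1)⁻¹ * A : Matrix (Fin d) (Fin d) ℝ)) i i ≤ 2 * (k : ℝ) := by
  set P := colSpaceProj Ak
  have hP := isStarProjection_colSpaceProj Ak
  have hk : (k : ℝ) ≠ 0 := fun hk => hlam_pos.ne' (by rw [hlam, hk, div_zero, zero_mul])
  have hresidual : ((1 - P) * (A * Aᵀ)).trace ≤ k * lam := by
    rw [hlam, ← mul_assoc, mul_one_div_cancel hk, one_mul]
    exact hP.trace_one_sub_mul_le_frobSq_sub (colSpaceProj_mul_self Ak)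
  have htrace : P.trace ≤ k := by
    rw [trace_colSpaceProj]
    exact_mod_cast hAk_rank
  calc ∑ i, (Aᵀ * (A * Aᵀ + lam • 1)⁻¹ * A : Matrix (Fin d) (Fin d) ℝ) i i
      = (A * Aᵀ * (A * Aᵀ + lam • 1)⁻¹).trace := by exact trace_mul_cycle Aᵀ _ A
    _ ≤ P.trace + ((1 - P) * (A * Aᵀ)).trace / lam :=
        (posSemidef_self_mul_conjTranspose A).trace_mul_inv_add_smul_le hP hlam_pos
    _ ≤ k + k := by
        gcongr
        rwa [div_le_iff₀ hlam_pos]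
    _ = 2 * k := by ring

/-- The sum of the ridge leverage scores of the columns of `A`, with ridge parameter
`λ = (1/k) ‖A - A_k‖_F²` (where `A_k` is a best rank-`k` approximation of `A` in
Frobenius norm), is at most `2k`.  The ridge leverage score of column `i` is
`aᵢᵀ (A Aᵀ + λ I)⁻¹ aᵢ = (Aᵀ (A Aᵀ + λ I)⁻¹ A) i i`. -/
theorem ridge_leverage_sum_le_two_k {n d k : ℕ} (hk : 1 ≤ k)
    (A Ak : Matrix (Fin n) (Fin d) ℝ)
    (hrank : k ≤ A.rank)
    (hAk_rank : Ak.rank ≤ k)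
    (hAk_opt : ∀ B : Matrix (Fin n) (Fin d) ℝ, B.rank ≤ k →
      frobSq (A - Ak) ≤ frobSq (A - B))
    (lam : ℝ) (hlam : lam = 1 / (k : ℝ) * frobSq (A - Ak)) (hlam_pos : 0 < lam) :
    ∑ i, ((Aᵀ * (A * Aᵀ + lam • 1)⁻¹ * A : Matrix (Fin d) (Fin d) ℝ)) i i ≤ 2 * (k : ℝ) :=
  ridge_leverage_sum_le_two_k_general A Ak hAk_rank lam hlam hlam_pos
end
end

section
/- Additive-multiplicative spectral bound: if C consists of the columns of A whose ridge leverage scores are kept by the deterministic thresholding algorithm, so that the sum of the ridge leverage scores of the discarded columns is less than ε, then (1−ε) A Aᵀ − (ε/k)‖A − A_k‖_F² I ⪯ C Cᵀ ⪯ A Aᵀ. -/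
/-!
Let `B` consist of the discarded columns `b_j`, so that `A Aᵀ = C Cᵀ + B Bᵀ`; this already gives
`C Cᵀ ⪯ A Aᵀ`. Put `M = A Aᵀ + λ I`, which is positive definite. Cauchy–Schwarz for the inner
product defined by `M`, applied to `M⁻¹ b_j` and `v`, gives `(b_jᵀ v)² ≤ (b_jᵀ M⁻¹ b_j) (vᵀ M v)`,
and `b_jᵀ M⁻¹ b_j` is the ridge leverage score of the column `b_j`. Summing over `j` yields
`B Bᵀ ⪯ ε M`, which rearranges to the lower bound.
-/

open Matrix BigOperators Finset

noncomputable section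

def loewnerLE {n : Type*} [Fintype n] (M N : Matrix n n ℝ) : Prop :=
  (N - M).PosSemidef

namespace Matrix

-- Without the ascriptions the products elaborate with the default `HMul` instance of
-- `CStarMatrix`, and `mul_apply` no longer applies.
theorem mul_eq_add_submatrix_compl {l ι m α : Type*} [Fintype ι] [DecidableEq ι]
    [NonUnitalNonAssocSemiring α] (A : Matrix l ι α) (B : Matrix ι m α) (s : Finset ι) :
    A * B =
      (A.submatrix id Subtype.val : Matrix l s α) * (B.submatrix Subtype.val id : Matrix s m α) +
        (A.submatrix id Subtype.val : Matrix l {j // j ∉ s} α) *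
          (B.submatrix Subtype.val id : Matrix {j // j ∉ s} m α) := by
  ext i k
  simp only [add_apply, mul_apply, submatrix_apply, id_eq]
  rw [sum_coe_sort s (fun j => A i j * B j k),
    ← sum_subtype sᶜ (fun _ => mem_compl) (fun j => A i j * B j k), sum_add_sum_compl]

variable {m n : Type*} [Fintype m] [Fintype n]

theorem posSemidef_self_mul_transpose (A : Matrix n m ℝ) : (A * Aᵀ).PosSemidef := by
  simpa using posSemidef_self_mul_conjTranspose A

theorem IsHermitian.mulVec_dotProduct {M : Matrix n n ℝ} (hM : M.IsHermitian) (v w : n → ℝ) :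
    M *ᵥ v ⬝ᵥ w = v ⬝ᵥ M *ᵥ w := by
  rw [dotProduct_mulVec, ← vecMul_transpose, ← conjTranspose_eq_transpose_of_trivial, hM.eq]

theorem PosSemidef.dotProduct_mulVec_sq_le {M : Matrix n n ℝ} (hM : M.PosSemidef) (v w : n → ℝ) :
    (v ⬝ᵥ M *ᵥ w) ^ 2 ≤ (v ⬝ᵥ M *ᵥ v) * (w ⬝ᵥ M *ᵥ w) := by
  have hsymm : w ⬝ᵥ M *ᵥ v = v ⬝ᵥ M *ᵥ w := by
    rw [← hM.isHermitian.mulVec_dotProduct, dotProduct_comm]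
  have hquad (t : ℝ) :
      0 ≤ (w ⬝ᵥ M *ᵥ w) * (t * t) + 2 * (v ⬝ᵥ M *ᵥ w) * t + v ⬝ᵥ M *ᵥ v := by
    have := hM.dotProduct_mulVec_nonneg (v + t • w)
    simp only [star_trivial, add_dotProduct, dotProduct_add, mulVec_add, mulVec_smul,
      smul_dotProduct, dotProduct_smul, smul_eq_mul, hsymm] at this
    linarith
  have := discrim_le_zero hquad
  rw [discrim] at this
  nlinarith

theorem PosDef.dotProduct_sq_le [DecidableEq n] {M : Matrix n n ℝ} (hM : M.PosDef) (b v : n → ℝ) :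
    (b ⬝ᵥ v) ^ 2 ≤ (b ⬝ᵥ M⁻¹ *ᵥ b) * (v ⬝ᵥ M *ᵥ v) := by
  have hdet : IsUnit M.det := (isUnit_iff_isUnit_det M).mp hM.isUnit
  obtain ⟨w, rfl⟩ : ∃ w, M *ᵥ w = b :=
    ⟨M⁻¹ *ᵥ b, by rw [mulVec_mulVec, mul_nonsing_inv M hdet, one_mulVec]⟩
  rw [mulVec_mulVec, nonsing_inv_mul M hdet, one_mulVec, hM.isHermitian.mulVec_dotProduct,
    hM.isHermitian.mulVec_dotProduct]
  exact hM.posSemidef.dotProduct_mulVec_sq_le w v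

theorem PosDef.posSemidef_smul_sub_mul_transpose [DecidableEq n] {M : Matrix n n ℝ}
    (hM : M.PosDef) (B : Matrix n m ℝ) {ε : ℝ} (hε : (Bᵀ * M⁻¹ * B).trace ≤ ε) :
    (ε • M - B * Bᵀ).PosSemidef := by
  refine .of_dotProduct_mulVec_nonneg ?_ fun v => ?_
  · exact (hM.isHermitian.smul (.all ε)).sub (posSemidef_self_mul_transpose B).isHermitian
  have hquad : v ⬝ᵥ (B * Bᵀ) *ᵥ v = ∑ j, (Bᵀ j ⬝ᵥ v) ^ 2 := by
    rw [← mulVec_mulVec, dotProduct_mulVec, ← mulVec_transpose]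
    simp only [dotProduct, sq]
    rfl
  have htrace : (Bᵀ * M⁻¹ * B).trace = ∑ j, Bᵀ j ⬝ᵥ M⁻¹ *ᵥ Bᵀ j := by
    rw [Matrix.mul_assoc]
    rfl
  have hMv := hM.posSemidef.dotProduct_mulVec_nonneg v
  rw [star_trivial] at hMv ⊢
  rw [sub_mulVec, dotProduct_sub, smul_mulVec, dotProduct_smul, smul_eq_mul, sub_nonneg]
  calc v ⬝ᵥ (B * Bᵀ) *ᵥ v = ∑ j, (Bᵀ j ⬝ᵥ v) ^ 2 := hquad
    _ ≤ ∑ j, (Bᵀ j ⬝ᵥ M⁻¹ *ᵥ Bᵀ j) * (v ⬝ᵥ M *ᵥ v) :=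
      sum_le_sum fun j _ => hM.dotProduct_sq_le _ v
    _ = (Bᵀ * M⁻¹ * B).trace * (v ⬝ᵥ M *ᵥ v) := by rw [htrace, sum_mul]
    _ ≤ ε * (v ⬝ᵥ M *ᵥ v) := mul_le_mul_of_nonneg_right hε hMv

end Matrix

theorem drls_spectral_bound_general {n d : ℕ}
    (A : Matrix (Fin n) (Fin d) ℝ)
    (lam : ℝ) (hlam_pos : 0 < lam)
    (ε : ℝ) (Θ : Finset (Fin d))
    (hdiscard : ∑ i ∈ Θᶜ, ((Aᵀ * (A * Aᵀ + lam • 1)⁻¹ * A : Matrix (Fin d) (Fin d) ℝ)) i i < ε)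
    (C : Matrix (Fin n) {x // x ∈ Θ} ℝ) (hC : ∀ i j, C i j = A i (j : Fin d)) :
    loewnerLE ((1 - ε) • (A * Aᵀ) - (ε * lam) • 1) (C * Cᵀ) ∧
      loewnerLE (C * Cᵀ) (A * Aᵀ) := by
  set M := A * Aᵀ + lam • (1 : Matrix (Fin n) (Fin n) ℝ) with hM_def
  have hM : M.PosDef :=
    PosDef.posSemidef_add (posSemidef_self_mul_transpose A) (.smul .one hlam_pos)
  set B := A.submatrix id (Subtype.val : {j // j ∉ Θ} → Fin d)
  have hsplit : A * Aᵀ = C * Cᵀ + B * Bᵀ := by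
    obtain rfl : C = A.submatrix id Subtype.val := ext hC
    rw [mul_eq_add_submatrix_compl A Aᵀ Θ]
    rfl
  have htrace : (Bᵀ * M⁻¹ * B).trace ≤ ε := by
    rw [sum_subtype Θᶜ (fun _ => mem_compl) _] at hdiscard
    exact hdiscard.le
  refine ⟨?_, ?_⟩
  · rw [loewnerLE]
    convert hM.posSemidef_smul_sub_mul_transpose B htrace using 1
    rw [hM_def, hsplit]
    module
  · rw [loewnerLE, hsplit, add_sub_cancel_left]
    exact posSemidef_self_mul_transpose B

/-- Additive-multiplicative spectral bound for deterministic ridge leverage score sampling: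
if `C` consists of the columns of `A` whose indices lie in `Θ`, and the total ridge leverage
score of the discarded columns is `< ε`, then
`(1-ε) A Aᵀ - (ε/k)‖A - A_k‖_F² I ⪯ C Cᵀ ⪯ A Aᵀ`. -/
theorem drls_spectral_bound {n d k : ℕ} (hk : 1 ≤ k)
    (A Ak : Matrix (Fin n) (Fin d) ℝ)
    (hrank : k ≤ A.rank)
    (hAk_rank : Ak.rank ≤ k)
    (hAk_opt : ∀ B : Matrix (Fin n) (Fin d) ℝ, B.rank ≤ k →
      frobSq (A - Ak) ≤ frobSq (A - B))
    (lam : ℝ) (hlam : lam = 1 / (k : ℝ) * frobSq (A - Ak)) (hlam_pos : 0 < lam)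
    (ε : ℝ) (Θ : Finset (Fin d))
    (hdiscard : ∑ i ∈ Θᶜ, ((Aᵀ * (A * Aᵀ + lam • 1)⁻¹ * A : Matrix (Fin d) (Fin d) ℝ)) i i < ε)
    (C : Matrix (Fin n) {x // x ∈ Θ} ℝ) (hC : ∀ i j, C i j = A i (j : Fin d)) :
    loewnerLE ((1 - ε) • (A * Aᵀ) - (ε * lam) • 1) (C * Cᵀ) ∧
      loewnerLE (C * Cᵀ) (A * Aᵀ) :=
  drls_spectral_bound_general A lam hlam_pos ε Θ hdiscard C hC
end
end

section
/- Head direction bound: let P_m = U_m U_mᵀ project onto the top m left singular vectors of A, where m is chosen so that σ_m² ≥ (1/k)‖A−A_k‖_F². If C satisfies the additive-multiplicative spectral bound (1−ε) A Aᵀ − (ε/k)‖A−A_k‖_F² I ⪯ C Cᵀ, then (1−2ε) P_m A Aᵀ P_m ⪯ P_m C Cᵀ P_m. -/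
open Matrix BigOperators Finset

noncomputable section

/-- Head direction bound: let `P_m = U_m U_mᵀ` project onto the top `m` left singular
directions of `A`, all of whose squared singular values are at least
`λ = (1/k)‖A-A_k‖_F²`.  If `C` satisfies the additive-multiplicative spectral lower bound
`(1-ε) A Aᵀ - ελ I ⪯ C Cᵀ`, then `(1-2ε) P_m A Aᵀ P_m ⪯ P_m C Cᵀ P_m`. -/
theorem drls_head_bound {n dA dC k m : ℕ} (hk : 1 ≤ k)
    (A Ak : Matrix (Fin n) (Fin dA) ℝ) (C : Matrix (Fin n) (Fin dC) ℝ)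
    (hrank : k ≤ A.rank)
    (hAk_rank : Ak.rank ≤ k)
    (hAk_opt : ∀ B : Matrix (Fin n) (Fin dA) ℝ, B.rank ≤ k →
      frobSq (A - Ak) ≤ frobSq (A - B))
    (lam : ℝ) (hlam : lam = 1 / (k : ℝ) * frobSq (A - Ak)) (hlam_pos : 0 < lam)
    -- top-`m` left singular vectors of `A` with eigenvalues `s i = σ_i² ≥ λ`
    (Um : Matrix (Fin n) (Fin m) ℝ) (s : Fin m → ℝ)
    (hUm : Umᵀ * Um = 1)
    (heig : A * Aᵀ * Um = Um * Matrix.diagonal s)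
    (hs : ∀ i, lam ≤ s i)
    (ε : ℝ) (hε : 0 ≤ ε)
    (hspec : loewnerLE ((1 - ε) • (A * Aᵀ) - (ε * lam) • 1) (C * Cᵀ)) :
    loewnerLE ((1 - 2 * ε) • ((Um * Umᵀ) * (A * Aᵀ) * (Um * Umᵀ)))
      ((Um * Umᵀ) * (C * Cᵀ) * (Um * Umᵀ)) := by

  have hdiag : Matrix.diagonal (fun i => ε * (s i - lam)) =
      ε • Matrix.diagonal s - (ε * lam) • (1 : Matrix (Fin m) (Fin m) ℝ) := by
    ext i j
    by_cases h : i = j <;> simp [Matrix.diagonal, h, Matrix.one_apply] <;> ring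
  have hN : (Matrix.diagonal (fun i => ε * (s i - lam))).PosSemidef :=
    Matrix.posSemidef_diagonal_iff.mpr fun i =>
      mul_nonneg hε (sub_nonneg.mpr (hs i))
  have hM := hspec
  unfold loewnerLE at hM ⊢
  have hMc : ((Um * Umᵀ)ᴴ * (C * Cᵀ - ((1 - ε) • (A * Aᵀ) - (ε * lam) • 1)) *
      (Um * Umᵀ)).PosSemidef := hM.conjTranspose_mul_mul_same _
  have hNc : (Um * Matrix.diagonal (fun i => ε * (s i - lam)) * Umᴴ).PosSemidef :=
    hN.mul_mul_conjTranspose_same Um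
  have hsum := hMc.add hNc
  have h1 : Umᵀ * (A * Aᵀ * Um) = Matrix.diagonal s := by
    rw [heig, ← Matrix.mul_assoc, hUm, Matrix.one_mul]
  have hPAP : (Um * Umᵀ) * (A * Aᵀ) * (Um * Umᵀ) = Um * Matrix.diagonal s * Umᵀ := by
    rw [show (Um * Umᵀ) * (A * Aᵀ) * (Um * Umᵀ) = Um * ((Umᵀ * (A * Aᵀ * Um)) * Umᵀ) by
      simp only [Matrix.mul_assoc], h1, Matrix.mul_assoc]
  have hPP : (Um * Umᵀ) * (Um * Umᵀ) = Um * Umᵀ := by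
    calc (Um * Umᵀ) * (Um * Umᵀ) = Um * (Umᵀ * Um) * Umᵀ := by
          simp only [Matrix.mul_assoc]
      _ = Um * Umᵀ := by rw [hUm, Matrix.mul_one]
  have heq : (Um * Umᵀ) * (C * Cᵀ) * (Um * Umᵀ) -
      (1 - 2 * ε) • ((Um * Umᵀ) * (A * Aᵀ) * (Um * Umᵀ)) =
      (Um * Umᵀ)ᴴ * (C * Cᵀ - ((1 - ε) • (A * Aᵀ) - (ε * lam) • 1)) * (Um * Umᵀ) +
      Um * Matrix.diagonal (fun i => ε * (s i - lam)) * Umᴴ := by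
    have hH : (Um * Umᵀ)ᴴ = Um * Umᵀ := by
      rw [Matrix.conjTranspose_mul]
      show (Umᵀ)ᵀ * Umᵀ = Um * Umᵀ
      rw [Matrix.transpose_transpose]
    have hUH : Umᴴ = Umᵀ := rfl
    rw [hH, hUH, hdiag]
    rw [Matrix.mul_sub, Matrix.sub_mul, Matrix.mul_sub, Matrix.sub_mul,
      Matrix.mul_smul, Matrix.smul_mul, Matrix.mul_smul, Matrix.smul_mul,
      Matrix.mul_one, Matrix.mul_sub, Matrix.sub_mul,
      Matrix.mul_smul, Matrix.smul_mul, Matrix.mul_smul, Matrix.smul_mul,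
      Matrix.mul_one, hPP, hPAP]
    rw [← hPAP]
    module
  rw [heq]
  exact hsum
end
end

section
/- Tail mass bound: let P_{∖m} = U_{∖m} U_{∖m}ᵀ project onto the left singular directions of A beyond index m, where m is the number of squared singular values exceeding (1/k)‖A−A_k‖_F². If C is the column subset kept by the deterministic ridge leverage algorithm with discarded leverage mass Σ_{i∉Θ} τ̄_i(A) ≤ ε, then 0 ≤ ‖P_{∖m} A‖_F² − ‖P_{∖m} C‖_F² ≤ 2ε ‖A−A_k‖_F². -/
open Matrix BigOperators Finset

noncomputable section

lemma conj_mul_conj {n : ℕ} (U : Matrix (Fin n) (Fin n) ℝ) (hU : Uᵀ * U = 1)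
    (a b : Fin n → ℝ) :
    (U * Matrix.diagonal a * Uᵀ) * (U * Matrix.diagonal b * Uᵀ)
      = U * Matrix.diagonal (fun i => a i * b i) * Uᵀ := by
  simp only [Matrix.mul_assoc]
  rw [show Uᵀ * (U * (Matrix.diagonal b * Uᵀ)) = Matrix.diagonal b * Uᵀ by
        rw [← Matrix.mul_assoc, hU, Matrix.one_mul],
      ← Matrix.mul_assoc (Matrix.diagonal a) (Matrix.diagonal b),
      Matrix.diagonal_mul_diagonal]

lemma tri_diag_apply {n d : ℕ} (B : Matrix (Fin n) (Fin d) ℝ) (c : Fin n → ℝ) (j : Fin d) :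
    (Bᵀ * Matrix.diagonal c * B) j j = ∑ l, c l * (B l j) ^ 2 := by
  rw [Matrix.mul_apply]
  simp only [Matrix.mul_diagonal, Matrix.transpose_apply]
  exact Finset.sum_congr rfl fun l _ => by ring

/-- Tail mass bound: with `P_{∖m} = U_{∖m} U_{∖m}ᵀ` the projection onto the left singular
directions of `A` beyond index `m` (those with `σ_i² < λ`), if `C` keeps the columns in `Θ`
and the discarded ridge leverage mass is at most `ε`, then
`0 ≤ ‖P_{∖m} A‖_F² - ‖P_{∖m} C‖_F² ≤ 2ε ‖A - A_k‖_F²`. -/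
theorem drls_tail_mass_bound {n d k : ℕ} (hk : 1 ≤ k)
    (A Ak : Matrix (Fin n) (Fin d) ℝ)
    (hrank : k ≤ A.rank)
    (hAk_rank : Ak.rank ≤ k)
    (hAk_opt : ∀ B : Matrix (Fin n) (Fin d) ℝ, B.rank ≤ k →
      frobSq (A - Ak) ≤ frobSq (A - B))
    (lam : ℝ) (hlam : lam = 1 / (k : ℝ) * frobSq (A - Ak)) (hlam_pos : 0 < lam)
    -- eigendecomposition `A Aᵀ = U diag(s) Uᵀ`, `s` nonincreasing
    (U : Matrix (Fin n) (Fin n) ℝ) (s : Fin n → ℝ)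
    (hU : Uᵀ * U = 1)
    (heig : A * Aᵀ = U * Matrix.diagonal s * Uᵀ)
    (hs_sorted : ∀ i j : Fin n, i ≤ j → s j ≤ s i)
    (hs_nonneg : ∀ i, 0 ≤ s i)
    (m : ℕ) (hm : ∀ i : Fin n, m ≤ (i : ℕ) → s i < lam)
    -- kept column set `Θ` with discarded ridge leverage mass at most `ε`
    (ε : ℝ) (Θ : Finset (Fin d))
    (hdiscard : ∑ i ∈ Θᶜ,
      ((Aᵀ * (A * Aᵀ + lam • 1)⁻¹ * A : Matrix (Fin d) (Fin d) ℝ)) i i ≤ ε)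
    (C : Matrix (Fin n) {x // x ∈ Θ} ℝ) (hC : ∀ i j, C i j = A i (j : Fin d)) :
    0 ≤ frobSq ((U * Matrix.diagonal (fun i : Fin n => if m ≤ (i : ℕ) then (1:ℝ) else 0) * Uᵀ) * A)
        - frobSq ((U * Matrix.diagonal (fun i : Fin n => if m ≤ (i : ℕ) then (1:ℝ) else 0) * Uᵀ) * C) ∧
      frobSq ((U * Matrix.diagonal (fun i : Fin n => if m ≤ (i : ℕ) then (1:ℝ) else 0) * Uᵀ) * A)
        - frobSq ((U * Matrix.diagonal (fun i : Fin n => if m ≤ (i : ℕ) then (1:ℝ) else 0) * Uᵀ) * C)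
        ≤ 2 * ε * frobSq (A - Ak) := by
  set D : Fin n → ℝ := fun i => if m ≤ (i : ℕ) then (1:ℝ) else 0 with hD
  set P : Matrix (Fin n) (Fin n) ℝ := U * Matrix.diagonal D * Uᵀ with hP
  set B : Matrix (Fin n) (Fin d) ℝ := Uᵀ * A with hB
  set M : Matrix (Fin n) (Fin d) ℝ := P * A with hM
  have hUU : U * Uᵀ = 1 := mul_eq_one_comm.mpr hU
  have hsl : ∀ i, 0 < s i + lam := fun i => add_pos_of_nonneg_of_pos (hs_nonneg i) hlam_pos
  set e : Fin n → ℝ := fun i => (s i + lam)⁻¹ with he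
  -- the inverse
  have hinv : (A * Aᵀ + lam • 1)⁻¹ = U * Matrix.diagonal e * Uᵀ := by
    apply Matrix.inv_eq_right_inv
    have h1 : A * Aᵀ + lam • (1 : Matrix (Fin n) (Fin n) ℝ)
        = U * Matrix.diagonal (fun i => s i + lam) * Uᵀ := by
      have h2 : lam • (1 : Matrix (Fin n) (Fin n) ℝ)
          = U * Matrix.diagonal (fun _ : Fin n => lam) * Uᵀ := by
        rw [← smul_one_eq_diagonal, Matrix.mul_smul, Matrix.smul_mul, Matrix.mul_one, hUU]
      rw [heig, h2, ← Matrix.add_mul, ← Matrix.mul_add, Matrix.diagonal_add]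
    rw [h1, conj_mul_conj U hU]
    have : (fun i => (s i + lam) * e i) = fun _ : Fin n => (1:ℝ) := by
      funext i; exact mul_inv_cancel₀ (ne_of_gt (hsl i))
    rw [this, Matrix.diagonal_one, Matrix.mul_one, hUU]
  -- column masses
  set f : Fin d → ℝ := fun j => ∑ i, (M i j) ^ 2 with hf
  have hfA : frobSq M = ∑ j, f j := by
    rw [frobSq, Finset.sum_comm]
  have hPC : ∀ i (j : {x // x ∈ Θ}), (P * C) i j = M i (j : Fin d) := by
    intro i j
    simp [hM, Matrix.mul_apply, hC]
  have hfC : frobSq (P * C) = ∑ j ∈ Θ, f j := by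
    rw [frobSq, Finset.sum_comm]
    rw [← Finset.sum_coe_sort Θ f]
    exact Finset.sum_congr rfl fun j _ => Finset.sum_congr rfl fun i _ => by rw [hPC]
  have hdiff : frobSq M - frobSq (P * C) = ∑ j ∈ Θᶜ, f j := by
    rw [hfA, hfC, ← Finset.sum_add_sum_compl Θ f]; ring
  -- formula for f
  have hMtM : Mᵀ * M = Bᵀ * Matrix.diagonal D * B := by
    have hDD : Matrix.diagonal D * Matrix.diagonal D = Matrix.diagonal D := by
      have hDD2 : (fun i => D i * D i) = D := by
        funext i; by_cases h : m ≤ (i : ℕ) <;> simp [hD, h]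
      rw [Matrix.diagonal_mul_diagonal, hDD2]
    have : Mᵀ * M = Bᵀ * (Matrix.diagonal D * ((Uᵀ * U) * (Matrix.diagonal D * B))) := by
      rw [hM, hP, hB]
      simp only [Matrix.transpose_mul, Matrix.transpose_transpose, Matrix.diagonal_transpose]
      simp only [Matrix.mul_assoc]
    rw [this, hU, Matrix.one_mul, ← Matrix.mul_assoc (Matrix.diagonal D), hDD,
      ← Matrix.mul_assoc]
  have hfform : ∀ j, f j = ∑ l, D l * (B l j) ^ 2 := by
    intro j
    have h1 : f j = (Mᵀ * M) j j := by
      simp [hf, Matrix.mul_apply, sq]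
    rw [h1, hMtM, tri_diag_apply]
  -- formula for leverage scores
  set T : Matrix (Fin d) (Fin d) ℝ := Aᵀ * (A * Aᵀ + lam • 1)⁻¹ * A with hT
  have htform : ∀ j, T j j = ∑ l, e l * (B l j) ^ 2 := by
    intro j
    have hTB : T = Bᵀ * Matrix.diagonal e * B := by
      rw [hT, hinv, hB]
      simp only [Matrix.transpose_mul, Matrix.transpose_transpose, Matrix.mul_assoc]
    rw [hTB, tri_diag_apply]
  -- nonnegativity pieces
  have hf_nonneg : ∀ j, 0 ≤ f j := fun j => Finset.sum_nonneg fun i _ => sq_nonneg _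
  have ht_nonneg : ∀ j, 0 ≤ T j j := by
    intro j
    rw [htform]
    exact Finset.sum_nonneg fun l _ =>
      mul_nonneg (inv_nonneg.mpr (le_of_lt (hsl l))) (sq_nonneg _)
  have hε_nonneg : 0 ≤ ε :=
    le_trans (Finset.sum_nonneg fun j _ => ht_nonneg j) hdiscard
  -- key per-column bound
  have hkey : ∀ j, f j ≤ 2 * lam * T j j := by
    intro j
    rw [hfform, htform, Finset.mul_sum]
    apply Finset.sum_le_sum
    intro l _
    by_cases h : m ≤ (l : ℕ)
    · have hs : s l < lam := hm l h
      have h1 : (1:ℝ) ≤ 2 * lam * e l := by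
        rw [he]
        rw [show 2 * lam * (s l + lam)⁻¹ = (2 * lam) / (s l + lam) by ring]
        rw [le_div_iff₀ (hsl l)]
        linarith
      calc D l * (B l j) ^ 2 = 1 * (B l j) ^ 2 := by simp [hD, h]
        _ ≤ (2 * lam * e l) * (B l j) ^ 2 :=
            mul_le_mul_of_nonneg_right h1 (sq_nonneg _)
        _ = 2 * lam * (e l * (B l j) ^ 2) := by ring
    · have : D l = 0 := by simp [hD, h]
      rw [this, zero_mul]
      have : 0 ≤ e l := inv_nonneg.mpr (le_of_lt (hsl l))
      positivity
  -- assemble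
  have hsum : ∑ j ∈ Θᶜ, f j ≤ 2 * lam * ε := by
    calc ∑ j ∈ Θᶜ, f j ≤ ∑ j ∈ Θᶜ, 2 * lam * T j j :=
          Finset.sum_le_sum fun j _ => hkey j
      _ = 2 * lam * ∑ j ∈ Θᶜ, T j j := by
          rw [Finset.mul_sum]
      _ ≤ 2 * lam * ε := by
          apply mul_le_mul_of_nonneg_left hdiscard
          linarith
  have hF_nonneg : 0 ≤ frobSq (A - Ak) :=
    Finset.sum_nonneg fun i _ => Finset.sum_nonneg fun j _ => sq_nonneg _
  have hlamF : lam ≤ frobSq (A - Ak) := by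
    rw [hlam]
    have hk1 : (1:ℝ) ≤ (k:ℝ) := by exact_mod_cast hk
    have : 1 / (k:ℝ) ≤ 1 := by
      rw [div_le_one (by linarith)]; exact hk1
    nlinarith
  constructor
  · rw [hdiff]
    exact Finset.sum_nonneg fun j _ => hf_nonneg j
  · rw [hdiff]
    calc ∑ j ∈ Θᶜ, f j ≤ 2 * lam * ε := hsum
      _ ≤ 2 * ε * frobSq (A - Ak) := by nlinarith
end
end

section
/- Approximate ridge kernel lemma: let K(M) = (M Mᵀ + (1/k)‖M−M_k‖_F² I)⁻¹. If C satisfies (1−ε) A Aᵀ − (ε/k)‖A−A_k‖_F² I ⪯ C Cᵀ ⪯ A Aᵀ and (1−αε)‖A−A_k‖_F² ≤ ‖C−C_k‖_F² ≤ ‖A−A_k‖_F² with 0 < ε < 1/2 and (α+1)ε < 1, then K(A) ⪯ K(C) ⪯ (1/(1−(α+1)ε)) K(A). -/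
/-!
Write `K_A = A Aᵀ + λ_A I` and `K_C = C Cᵀ + λ_C I` with `λ_M = ‖M - M_k‖_F² / k`. The hypotheses
give `K_C ⪯ K_A` at once, and `(1 - (α+1)ε) K_A ⪯ K_C` after splitting `(1 - (α+1)ε) K_A` into the
lower spectral bound, the term `-αε A Aᵀ ⪯ 0`, and a multiple of `I` controlled by the lower tail
bound. Both claims then follow because inversion reverses the Loewner order on positive definite
matrices, which is read off the variational formula `xᵀ P⁻¹ x = max_y (2 xᵀ y - yᵀ P y)`.
-/

open Matrix BigOperators Finset

noncomputable section

open scoped MatrixOrder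

namespace Matrix

variable {n : Type*} [Fintype n]

lemma IsHermitian.dotProduct_mulVec_comm {P : Matrix n n ℝ} (hP : P.IsHermitian) (x y : n → ℝ) :
    x ⬝ᵥ P *ᵥ y = y ⬝ᵥ P *ᵥ x := by
  rw [dotProduct_mulVec, ← mulVec_transpose, ← conjTranspose_eq_transpose_of_trivial, hP.eq,
    dotProduct_comm]

lemma mul_transpose_self_nonneg {m : Type*} [Fintype m] (A : Matrix n m ℝ) : 0 ≤ A * Aᵀ := by
  simpa [conjTranspose_eq_transpose_of_trivial] using (posSemidef_self_mul_conjTranspose A).nonneg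

variable [DecidableEq n]

lemma PosDef.mulVec_inv_mulVec {P : Matrix n n ℝ} (hP : P.PosDef) (x : n → ℝ) :
    P *ᵥ (P⁻¹ *ᵥ x) = x := by
  rw [mulVec_mulVec, mul_nonsing_inv _ ((isUnit_iff_isUnit_det P).mp hP.isUnit), one_mulVec]

-- `0 ≤ (y - P⁻¹ x)ᵀ P (y - P⁻¹ x)`, expanded; equality holds at `y = P⁻¹ x`.
lemma PosDef.two_mul_dotProduct_sub_le {P : Matrix n n ℝ} (hP : P.PosDef) (x y : n → ℝ) :
    2 * (x ⬝ᵥ y) - y ⬝ᵥ P *ᵥ y ≤ x ⬝ᵥ P⁻¹ *ᵥ x := by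
  have hsq := hP.posSemidef.dotProduct_mulVec_nonneg (y - P⁻¹ *ᵥ x)
  rw [star_trivial, mulVec_sub, dotProduct_sub, sub_dotProduct, sub_dotProduct,
    hP.mulVec_inv_mulVec, hP.isHermitian.dotProduct_mulVec_comm (P⁻¹ *ᵥ x) y,
    hP.mulVec_inv_mulVec] at hsq
  rw [dotProduct_comm x y, dotProduct_comm x]
  linarith

lemma PosDef.inv_le_inv_of_le {P Q : Matrix n n ℝ} (hP : P.PosDef) (hPQ : P ≤ Q) :
    Q⁻¹ ≤ P⁻¹ := by
  rw [le_iff]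
  have hQ : Q.PosDef := by simpa using hP.add_posSemidef hPQ
  refine posSemidef_iff_dotProduct_mulVec.mpr
    ⟨hP.inv.isHermitian.sub hQ.inv.isHermitian, fun x => ?_⟩
  set z := Q⁻¹ *ᵥ x
  have hQz : z ⬝ᵥ Q *ᵥ z = x ⬝ᵥ z := by rw [hQ.mulVec_inv_mulVec, dotProduct_comm]
  have hPQz : z ⬝ᵥ P *ᵥ z ≤ z ⬝ᵥ Q *ᵥ z := by
    have := (le_iff.mp hPQ).dotProduct_mulVec_nonneg z
    rw [star_trivial, sub_mulVec, dotProduct_sub] at this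
    linarith
  have := hP.two_mul_dotProduct_sub_le x z
  rw [star_trivial, sub_mulVec, dotProduct_sub]
  linarith

lemma posDef_mul_transpose_add_smul_one {m : Type*} [Fintype m] (A : Matrix n m ℝ) {r : ℝ}
    (hr : 0 < r) :
    (A * Aᵀ + r • 1).PosDef :=
  PosDef.posSemidef_add (mul_transpose_self_nonneg A).posSemidef (PosDef.one.smul hr)

lemma PosDef.inv_smul {P : Matrix n n ℝ} (hP : P.PosDef) {s : ℝ} (hs : s ≠ 0) :
    (s • P)⁻¹ = s⁻¹ • P⁻¹ :=
  inv_smul' P (Units.mk0 s hs) ((isUnit_iff_isUnit_det P).mp hP.isUnit)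

end Matrix

lemma smul_add_smul_le_add_smul_of_le {E : Type*} [AddCommGroup E] [PartialOrder E]
    [IsOrderedAddMonoid E] [Module ℝ E] [PosSMulMono ℝ E] {G H u : E} {a b α ε : ℝ}
    (hG : 0 ≤ G) (hu : 0 ≤ u) (hαε : 0 ≤ α * ε)
    (hGH : (1 - ε) • G - (ε * a) • u ≤ H) (hab : (1 - α * ε) * a ≤ b) :
    (1 - (α + 1) * ε) • (G + a • u) ≤ H + b • u :=
  calc (1 - (α + 1) * ε) • (G + a • u)
      = ((1 - ε) • G - (ε * a) • u) - (α * ε) • G + ((1 - α * ε) * a) • u := by module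
    _ ≤ H - 0 + b • u := by gcongr; exact smul_nonneg hαε hG
    _ = H + b • u := by rw [sub_zero]

theorem drls_kernel_bound_general {n dA dC k : ℕ} (hk : 1 ≤ k)
    (A Ak : Matrix (Fin n) (Fin dA) ℝ) (C Ck : Matrix (Fin n) (Fin dC) ℝ)
    (hApos : 0 < frobSq (A - Ak))
    (α ε : ℝ) (hα : 0 < α) (hε0 : 0 < ε) (hαε : (α + 1) * ε < 1)
    (hspecL : loewnerLE
      ((1 - ε) • (A * Aᵀ) - (ε * (1 / (k : ℝ) * frobSq (A - Ak))) • 1) (C * Cᵀ))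
    (hspecR : loewnerLE (C * Cᵀ) (A * Aᵀ))
    (htailL : (1 - α * ε) * frobSq (A - Ak) ≤ frobSq (C - Ck))
    (htailR : frobSq (C - Ck) ≤ frobSq (A - Ak)) :
    loewnerLE ((A * Aᵀ + (1 / (k : ℝ) * frobSq (A - Ak)) • 1)⁻¹)
        ((C * Cᵀ + (1 / (k : ℝ) * frobSq (C - Ck)) • 1)⁻¹) ∧
      loewnerLE ((C * Cᵀ + (1 / (k : ℝ) * frobSq (C - Ck)) • 1)⁻¹)
        ((1 / (1 - (α + 1) * ε)) • (A * Aᵀ + (1 / (k : ℝ) * frobSq (A - Ak)) • 1)⁻¹) := by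
  have hk₀ : (0 : ℝ) < 1 / k := by positivity
  have hs : 0 < 1 - (α + 1) * ε := by linarith
  have hrA : 0 < 1 / (k : ℝ) * frobSq (A - Ak) := mul_pos hk₀ hApos
  have hrC : 0 < 1 / (k : ℝ) * frobSq (C - Ck) := mul_pos hk₀ (by nlinarith)
  have hr : 1 / (k : ℝ) * frobSq (C - Ck) ≤ 1 / (k : ℝ) * frobSq (A - Ak) := by gcongr
  have hr' : (1 - α * ε) * (1 / (k : ℝ) * frobSq (A - Ak)) ≤ 1 / (k : ℝ) * frobSq (C - Ck) := by
    rw [mul_left_comm]; gcongr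
  constructor
  · exact (posDef_mul_transpose_add_smul_one C hrC).inv_le_inv_of_le
      (add_le_add hspecR (smul_le_smul_of_nonneg_right hr PosSemidef.one.nonneg))
  · have hKA := posDef_mul_transpose_add_smul_one A hrA
    have hscaled := smul_add_smul_le_add_smul_of_le (mul_transpose_self_nonneg A)
      PosSemidef.one.nonneg (by positivity) hspecL hr'
    have := (hKA.smul hs).inv_le_inv_of_le hscaled
    rwa [hKA.inv_smul hs.ne', ← one_div (1 - (α + 1) * ε)] at this

/-- Approximate ridge kernel lemma: with `K(M) = (M Mᵀ + (1/k)‖M-M_k‖_F² I)⁻¹`, if `C`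
satisfies the additive-multiplicative spectral bound and the tail-norm bound, with
`0 < ε < 1/2` and `(α+1)ε < 1`, then `K(A) ⪯ K(C) ⪯ (1/(1-(α+1)ε)) K(A)`. -/
theorem drls_kernel_bound {n dA dC k : ℕ} (hk : 1 ≤ k)
    (A Ak : Matrix (Fin n) (Fin dA) ℝ) (C Ck : Matrix (Fin n) (Fin dC) ℝ)
    (hrankA : k ≤ A.rank) (hrankC : k ≤ C.rank)
    (hAk_rank : Ak.rank ≤ k)
    (hAk_opt : ∀ B : Matrix (Fin n) (Fin dA) ℝ, B.rank ≤ k →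
      frobSq (A - Ak) ≤ frobSq (A - B))
    (hCk_rank : Ck.rank ≤ k)
    (hCk_opt : ∀ B : Matrix (Fin n) (Fin dC) ℝ, B.rank ≤ k →
      frobSq (C - Ck) ≤ frobSq (C - B))
    (hApos : 0 < frobSq (A - Ak))
    (α ε : ℝ) (hα : 0 < α) (hε0 : 0 < ε) (hε1 : ε < 1 / 2) (hαε : (α + 1) * ε < 1)
    (hspecL : loewnerLE
      ((1 - ε) • (A * Aᵀ) - (ε * (1 / (k : ℝ) * frobSq (A - Ak))) • 1) (C * Cᵀ))
    (hspecR : loewnerLE (C * Cᵀ) (A * Aᵀ))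
    (htailL : (1 - α * ε) * frobSq (A - Ak) ≤ frobSq (C - Ck))
    (htailR : frobSq (C - Ck) ≤ frobSq (A - Ak)) :
    loewnerLE ((A * Aᵀ + (1 / (k : ℝ) * frobSq (A - Ak)) • 1)⁻¹)
        ((C * Cᵀ + (1 / (k : ℝ) * frobSq (C - Ck)) • 1)⁻¹) ∧
      loewnerLE ((C * Cᵀ + (1 / (k : ℝ) * frobSq (C - Ck)) • 1)⁻¹)
        ((1 / (1 - (α + 1) * ε)) • (A * Aᵀ + (1 / (k : ℝ) * frobSq (A - Ak)) • 1)⁻¹) :=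
  drls_kernel_bound_general hk A Ak C Ck hApos α ε hα hε0 hαε hspecL hspecR htailL htailR
end
end

section
/- Power-law tail bound: for a > 1 and integers 1 ≤ t < d, the ratio (Σ_{i=t+1}^{d} i^{−a}) / (Σ_{i=1}^{d} i^{−a}) is at most max(2/(t+1)^a, 2/((a−1)(t+1)^{a−1})). -/
open BigOperators Finset

/-!
The denominator contains the term `1 ^ (-a) = 1`, so the ratio is at most the numerator. Splitting
off its first term `(t + 1) ^ (-a)` and comparing the rest with the integral of the decreasing
function `x ^ (-a)` from `t + 1` to `∞`, which equals `(t + 1) ^ (1 - a) / (a - 1)`, bounds the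
numerator by a sum of two terms, each at most half of the maximum.
-/

theorem sum_Ioc_rpow_neg_le {a : ℝ} (ha : 1 < a) {n : ℕ} (hn : 0 < n) (m : ℕ) :
    ∑ i ∈ Ioc n m, (i : ℝ) ^ (-a) ≤ (n : ℝ) ^ (1 - a) / (a - 1) := by
  have ha' : 0 < a - 1 := by linarith
  have hn' : (0 : ℝ) < n := by exact_mod_cast hn
  rcases le_or_gt m n with hmn | hnm
  · rw [Ioc_eq_empty_of_le hmn, sum_empty]
    positivity
  have hanti : AntitoneOn (fun x : ℝ => x ^ (-a)) (Set.Icc n m) := fun x hx y _ hxy =>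
    Real.rpow_le_rpow_of_nonpos (hn'.trans_le hx.1) hxy (by linarith)
  calc ∑ i ∈ Ioc n m, (i : ℝ) ^ (-a) = ∑ i ∈ Ico n m, ((i + 1 : ℕ) : ℝ) ^ (-a) := by
        rw [← Ico_add_one_add_one_eq_Ioc, ← sum_Ico_add']
    _ ≤ ∫ x in (n : ℝ)..m, x ^ (-a) := hanti.sum_le_integral_Ico hnm.le
    _ = ((n : ℝ) ^ (1 - a) - (m : ℝ) ^ (1 - a)) / (a - 1) := by
        have hm' : (0 : ℝ) < m := hn'.trans (by exact_mod_cast hnm)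
        rw [integral_rpow (Or.inr ⟨by linarith, Set.notMem_uIcc_of_lt hn' hm'⟩),
          show -a + 1 = 1 - a by ring, ← neg_sub a 1, div_neg, ← neg_div, neg_sub]
    _ ≤ (n : ℝ) ^ (1 - a) / (a - 1) := by
        gcongr
        exact sub_le_self _ (by positivity)

theorem one_le_sum_Icc_one_rpow (a : ℝ) {d : ℕ} (hd : 1 ≤ d) :
    1 ≤ ∑ i ∈ Icc 1 d, (i : ℝ) ^ a := by
  simpa using single_le_sum (f := fun i : ℕ => (i : ℝ) ^ a)
    (fun i _ => by positivity) (mem_Icc.2 ⟨le_rfl, hd⟩)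

theorem add_le_max_two_mul {R : Type*} [Ring R] [LinearOrder R] [IsStrictOrderedRing R]
    {x y : R} : x + y ≤ max (2 * x) (2 * y) := by
  rw [two_mul, two_mul]
  rcases le_total x y with h | h
  · exact le_max_of_le_right (by gcongr)
  · exact le_max_of_le_left (by gcongr)

theorem powerlaw_tail_ratio_general (a : ℝ) (ha : 1 < a) (t d : ℕ) (htd : t < d) :
    (∑ i ∈ Finset.Icc (t + 1) d, (i : ℝ) ^ (-a)) /
        (∑ i ∈ Finset.Icc 1 d, (i : ℝ) ^ (-a)) ≤
      max (2 / ((t : ℝ) + 1) ^ a) (2 / ((a - 1) * ((t : ℝ) + 1) ^ (a - 1))) := by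
  have ht : (0 : ℝ) < t + 1 := by positivity
  calc (∑ i ∈ Icc (t + 1) d, (i : ℝ) ^ (-a)) / (∑ i ∈ Icc 1 d, (i : ℝ) ^ (-a))
      ≤ ∑ i ∈ Icc (t + 1) d, (i : ℝ) ^ (-a) :=
        div_le_self (sum_nonneg fun i _ => by positivity) (one_le_sum_Icc_one_rpow _ (by omega))
    _ = ((t : ℝ) + 1) ^ (-a) + ∑ i ∈ Ioc (t + 1) d, (i : ℝ) ^ (-a) := by
        rw [← add_sum_Ioc_eq_sum_Icc htd, Nat.cast_add_one]
    _ ≤ ((t : ℝ) + 1) ^ (-a) + ((t : ℝ) + 1) ^ (1 - a) / (a - 1) := by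
        gcongr
        exact_mod_cast sum_Ioc_rpow_neg_le ha t.succ_pos d
    _ ≤ max (2 * ((t : ℝ) + 1) ^ (-a)) (2 * (((t : ℝ) + 1) ^ (1 - a) / (a - 1))) :=
        add_le_max_two_mul
    _ = _ := by
        rw [Real.rpow_neg ht.le, show 1 - a = -(a - 1) by ring, Real.rpow_neg ht.le]
        congr 1
        field_simp

/-- Power-law tail bound: for `a > 1` and integers `1 ≤ t < d`,
`(Σ_{i=t+1}^d i^{-a}) / (Σ_{i=1}^d i^{-a}) ≤ max(2/(t+1)^a, 2/((a-1)(t+1)^{a-1}))`. -/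
theorem powerlaw_tail_ratio (a : ℝ) (ha : 1 < a) (t d : ℕ) (ht : 1 ≤ t) (htd : t < d) :
    (∑ i ∈ Finset.Icc (t + 1) d, (i : ℝ) ^ (-a)) /
        (∑ i ∈ Finset.Icc 1 d, (i : ℝ) ^ (-a)) ≤
      max (2 / ((t : ℝ) + 1) ^ a) (2 / ((a - 1) * ((t : ℝ) + 1) ^ (a - 1))) :=
  powerlaw_tail_ratio_general a ha t d htd
end
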